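/- With A = A_{n,m} ⊆ B = k[x_1,…,x_n,y_1,…,y_m,z] as above, the intersection k[x_1,…,x_n,y_1,…,y_m] ∩ A equals the k-subalgebra generated by all monomials x_1^{i_1}⋯x_n^{i_n} y_1^{j_1}⋯y_m^{j_m} with j_1+⋯+j_m > 0. In particular, any element of A depending only on x_1,…,x_n is a constant. -/
import Mathlib


open MvPolynomial

/-- The variables of `B_{n,m} = k[x_1,…,x_n,y_1,…,y_m,z]`. -/
abbrev BonnetVars (n m : ℕ) := Fin n ⊕ Fin m ⊕ Unit

variable (k : Type*) [Field k] (n m : ℕ)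

/-- The variable `x_i`. -/
noncomputable def Xv (i : Fin n) : MvPolynomial (BonnetVars n m) k := X (Sum.inl i)
/-- The variable `y_j`. -/
noncomputable def Yv (j : Fin m) : MvPolynomial (BonnetVars n m) k := X (Sum.inr (Sum.inl j))
/-- The variable `z`. -/
noncomputable def Zv : MvPolynomial (BonnetVars n m) k := X (Sum.inr (Sum.inr ()))

/-- The generators of the subalgebra `A_{n,m}`: the `y_j`, `z`, the polynomials
`x_i^2 + x_i z` and `x_i^3 + x_i^2 z`, and the monomials `x_1^{i_1}⋯x_n^{i_n} y_j`
with all `i_k ≤ 1`. -/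
noncomputable def AnmGens : Set (MvPolynomial (BonnetVars n m) k) :=
  Set.range (Yv k n m) ∪ {Zv k n m}
    ∪ Set.range (fun i => Xv k n m i ^ 2 + Xv k n m i * Zv k n m)
    ∪ Set.range (fun i => Xv k n m i ^ 3 + Xv k n m i ^ 2 * Zv k n m)
    ∪ {p | ∃ (s : Finset (Fin n)) (j : Fin m), p = (∏ i ∈ s, Xv k n m i) * Yv k n m j}

/-- The subalgebra `A_{n,m}` of `B_{n,m}`. -/
noncomputable def Anm : Subalgebra k (MvPolynomial (BonnetVars n m) k) :=
  Algebra.adjoin k (AnmGens k n m)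

/-- The set of monomials `x_1^{i_1}⋯x_n^{i_n} y_1^{j_1}⋯y_m^{j_m}` with
`j_1 + ⋯ + j_m > 0`. -/
noncomputable def MonoSet : Set (MvPolynomial (BonnetVars n m) k) :=
  {p | ∃ (iv : Fin n → ℕ) (jv : Fin m → ℕ), 0 < ∑ j, jv j ∧
    p = (∏ i, Xv k n m i ^ iv i) * ∏ j, Yv k n m j ^ jv j}

namespace BonnetAux

variable {k n m}

/-- Generic: a hom maps `adjoin k s` into any subalgebra containing images of `s`. -/
lemma adjoin_image_le {s : Set (MvPolynomial (BonnetVars n m) k)}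
    (φ : MvPolynomial (BonnetVars n m) k →ₐ[k] MvPolynomial (BonnetVars n m) k)
    {T : Subalgebra k (MvPolynomial (BonnetVars n m) k)}
    (h : ∀ x ∈ s, φ x ∈ T) {f} (hf : f ∈ Algebra.adjoin k s) : φ f ∈ T := by
  have h1 : φ f ∈ Subalgebra.map φ (Algebra.adjoin k s) := ⟨f, hf, rfl⟩
  rw [AlgHom.map_adjoin] at h1
  exact Algebra.adjoin_le (by rintro _ ⟨x, hx, rfl⟩; exact h x hx) h1

lemma eq_on_adjoin {s : Set (MvPolynomial (BonnetVars n m) k)}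
    {φ ψ : MvPolynomial (BonnetVars n m) k →ₐ[k] MvPolynomial (BonnetVars n m) k}
    (h : ∀ x ∈ s, φ x = ψ x) {f} (hf : f ∈ Algebra.adjoin k s) : φ f = ψ f :=
  Algebra.adjoin_le (fun x hx => (AlgHom.mem_equalizer φ ψ x).2 (h x hx)) hf

lemma eq_on_supported {s : Set (BonnetVars n m)}
    {φ ψ : MvPolynomial (BonnetVars n m) k →ₐ[k] MvPolynomial (BonnetVars n m) k}
    (h : ∀ w ∈ s, φ (X w) = ψ (X w)) {f} (hf : f ∈ supported k s) : φ f = ψ f := by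
  rw [supported_eq_adjoin_X] at hf
  exact eq_on_adjoin (by rintro _ ⟨w, hw, rfl⟩; exact h w hw) hf

/-- Every monomial `x^iv y^jv` with `∑ jv > 0` lies in `Anm`. -/
lemma mono_mem (iv : Fin n → ℕ) (jv : Fin m → ℕ) (hj : 0 < ∑ j, jv j) :
    (∏ i, Xv k n m i ^ iv i) * ∏ j, Yv k n m j ^ jv j ∈ Anm k n m := by
  obtain ⟨j0, hj0⟩ : ∃ j0, 0 < jv j0 := by
    by_contra hc; push_neg at hc
    simp only [Nat.le_zero] at hc
    simp [hc] at hj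
  have hy : Yv k n m j0 ∈ Anm k n m :=
    Algebra.subset_adjoin (by left; left; left; left; exact ⟨j0, rfl⟩)
  have hz : Zv k n m ∈ Anm k n m :=
    Algebra.subset_adjoin (by left; left; left; right; rfl)
  suffices H : ∀ N (iv : Fin n → ℕ), ∑ i, iv i = N →
      (∏ i, Xv k n m i ^ iv i) * ∏ j, Yv k n m j ^ jv j ∈ Anm k n m from H _ iv rfl
  intro N
  induction N using Nat.strong_induction_on with
  | _ N IH =>
  intro iv hN
  subst hN
  by_cases hcase : ∃ i0, 2 ≤ iv i0
  · obtain ⟨i0, hi0⟩ := hcase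
    set iv1 := Function.update iv i0 (iv i0 - 1) with hiv1
    set iv2 := Function.update iv i0 (iv i0 - 2) with hiv2
    have hsum : ∑ i, iv i = iv i0 + ∑ i ∈ Finset.univ.erase i0, iv i :=
      (Finset.add_sum_erase _ _ (Finset.mem_univ i0)).symm
    have hsum1 : ∑ i, iv1 i = (iv i0 - 1) + ∑ i ∈ Finset.univ.erase i0, iv i := by
      rw [← Finset.add_sum_erase _ _ (Finset.mem_univ i0)]
      congr 1
      · simp [hiv1]
      · exact Finset.sum_congr rfl fun i hi =>
          (Function.update_of_ne (Finset.ne_of_mem_erase hi) _ _)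
    have hsum2 : ∑ i, iv2 i = (iv i0 - 2) + ∑ i ∈ Finset.univ.erase i0, iv i := by
      rw [← Finset.add_sum_erase _ _ (Finset.mem_univ i0)]
      congr 1
      · simp [hiv2]
      · exact Finset.sum_congr rfl fun i hi =>
          (Function.update_of_ne (Finset.ne_of_mem_erase hi) _ _)
    have h1 : (∏ i, Xv k n m i ^ iv1 i) * ∏ j, Yv k n m j ^ jv j ∈ Anm k n m :=
      IH (∑ i, iv1 i) (by omega) iv1 rfl
    have h2 : (∏ i, Xv k n m i ^ iv2 i) * ∏ j, Yv k n m j ^ jv j ∈ Anm k n m :=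
      IH (∑ i, iv2 i) (by omega) iv2 rfl
    have hgen : Xv k n m i0 ^ 2 + Xv k n m i0 * Zv k n m ∈ Anm k n m :=
      Algebra.subset_adjoin (by left; left; right; exact ⟨i0, rfl⟩)
    have key : (∏ i, Xv k n m i ^ iv i) * ∏ j, Yv k n m j ^ jv j =
        (Xv k n m i0 ^ 2 + Xv k n m i0 * Zv k n m) *
          ((∏ i, Xv k n m i ^ iv2 i) * ∏ j, Yv k n m j ^ jv j) -
        Zv k n m * ((∏ i, Xv k n m i ^ iv1 i) * ∏ j, Yv k n m j ^ jv j) := by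
      have e0 : ∏ i, Xv k n m i ^ iv i =
          Xv k n m i0 ^ iv i0 * ∏ i ∈ Finset.univ.erase i0, Xv k n m i ^ iv i :=
        (Finset.mul_prod_erase _ _ (Finset.mem_univ i0)).symm
      have e1 : ∏ i, Xv k n m i ^ iv1 i =
          Xv k n m i0 ^ (iv i0 - 1) * ∏ i ∈ Finset.univ.erase i0, Xv k n m i ^ iv i := by
        rw [← Finset.mul_prod_erase _ _ (Finset.mem_univ i0)]
        congr 1
        · simp [hiv1]
        · exact Finset.prod_congr rfl fun i hi => by
            rw [hiv1, Function.update_of_ne (Finset.ne_of_mem_erase hi)]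
      have e2 : ∏ i, Xv k n m i ^ iv2 i =
          Xv k n m i0 ^ (iv i0 - 2) * ∏ i ∈ Finset.univ.erase i0, Xv k n m i ^ iv i := by
        rw [← Finset.mul_prod_erase _ _ (Finset.mem_univ i0)]
        congr 1
        · simp [hiv2]
        · exact Finset.prod_congr rfl fun i hi => by
            rw [hiv2, Function.update_of_ne (Finset.ne_of_mem_erase hi)]
      obtain ⟨b, hb⟩ : ∃ b, iv i0 = b + 2 := ⟨iv i0 - 2, by omega⟩
      rw [e0, e1, e2, hb]
      have : b + 2 - 1 = b + 1 := by omega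
      rw [this]
      have : b + 2 - 2 = b := by omega
      rw [this]
      ring
    rw [key]
    exact sub_mem (mul_mem hgen h2) (mul_mem hz h1)
  · push_neg at hcase
    -- all exponents ≤ 1 : squarefree case
    have hx : ∏ i, Xv k n m i ^ iv i = ∏ i ∈ Finset.univ.filter (fun i => iv i = 1), Xv k n m i := by
      rw [← Finset.prod_filter_mul_prod_filter_not Finset.univ (fun i => iv i = 1)]
      have h1 : ∀ i ∈ Finset.univ.filter (fun i => iv i = 1), Xv k n m i ^ iv i = Xv k n m i := by
        intro i hi
        rw [Finset.mem_filter] at hi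
        rw [hi.2, pow_one]
      have h2 : ∀ i ∈ Finset.univ.filter (fun i => ¬ iv i = 1), Xv k n m i ^ iv i = 1 := by
        intro i hi
        rw [Finset.mem_filter] at hi
        have : iv i = 0 := by have := hcase i; omega
        rw [this, pow_zero]
      rw [Finset.prod_congr rfl h1, Finset.prod_congr rfl h2, Finset.prod_const_one, mul_one]
    have hgen : (∏ i ∈ Finset.univ.filter (fun i => iv i = 1), Xv k n m i) * Yv k n m j0
        ∈ Anm k n m :=
      Algebra.subset_adjoin (by right; exact ⟨_, j0, rfl⟩)
    have hy' : ∏ j, Yv k n m j ^ jv j =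
        Yv k n m j0 * (Yv k n m j0 ^ (jv j0 - 1) *
          ∏ j ∈ Finset.univ.erase j0, Yv k n m j ^ jv j) := by
      rw [← Finset.mul_prod_erase _ _ (Finset.mem_univ j0), ← mul_assoc, ← pow_succ']
      congr 2
      omega
    rw [hx, hy', ← mul_assoc]
    refine mul_mem hgen (mul_mem (pow_mem hy _) (prod_mem fun j _ =>
      pow_mem (Algebra.subset_adjoin ?_) _))
    left; left; left; left; exact ⟨j, rfl⟩


variable (k n m) in
noncomputable def Aprime : Subalgebra k (MvPolynomial (BonnetVars n m) k) :=
  Algebra.adjoin k ({Zv k n m}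
    ∪ Set.range (fun i => Xv k n m i ^ 2 + Xv k n m i * Zv k n m)
    ∪ Set.range (fun i => Xv k n m i ^ 3 + Xv k n m i ^ 2 * Zv k n m))

variable (k n m) in
/-- The substitution `y ↦ 0`. -/
noncomputable def rho : MvPolynomial (BonnetVars n m) k →ₐ[k] MvPolynomial (BonnetVars n m) k :=
  aeval (fun w => match w with
    | Sum.inl i => X (Sum.inl i)
    | Sum.inr (Sum.inl _) => 0
    | Sum.inr (Sum.inr _) => X (Sum.inr (Sum.inr ())))

variable (k n m) in
/-- The substitution `x_i ↦ 0`. -/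
noncomputable def phi0 (i : Fin n) :
    MvPolynomial (BonnetVars n m) k →ₐ[k] MvPolynomial (BonnetVars n m) k :=
  aeval (Function.update X (Sum.inl i) 0)

variable (k n m) in
/-- The substitution `x_i ↦ -z`. -/
noncomputable def phi1 (i : Fin n) :
    MvPolynomial (BonnetVars n m) k →ₐ[k] MvPolynomial (BonnetVars n m) k :=
  aeval (Function.update X (Sum.inl i) (-(X (Sum.inr (Sum.inr ())))))

variable (k n m) in
/-- The substitution `z ↦ -x_i`. -/
noncomputable def psi (i : Fin n) :
    MvPolynomial (BonnetVars n m) k →ₐ[k] MvPolynomial (BonnetVars n m) k :=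
  aeval (Function.update X (Sum.inr (Sum.inr ())) (-(X (Sum.inl i))))

lemma const_of_mem_Aprime {f : MvPolynomial (BonnetVars n m) k}
    (hA : f ∈ Aprime k n m)
    (hs : f ∈ supported k (Set.range (Sum.inl : Fin n → BonnetVars n m))) :
    ∃ c : k, f = C c := by
  have key : ∀ i : Fin n, (f.vars : Set (BonnetVars n m)) ⊆ {w | w ≠ Sum.inl i} := by
    intro i
    have h01 : phi0 k n m i f = phi1 k n m i f := by
      refine eq_on_adjoin ?_ hA
      rintro x ((rfl | ⟨l, rfl⟩) | ⟨l, rfl⟩)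
      · simp [phi0, phi1, Zv]
      · simp only [phi0, phi1, Xv, Zv, map_add, map_mul, map_pow, aeval_X]
        by_cases h : l = i
        · subst h
          rw [Function.update_self, Function.update_self,
            Function.update_of_ne (by simp), Function.update_of_ne (by simp)]
          ring
        · rw [Function.update_of_ne (fun hc => h (Sum.inl.inj hc)), Function.update_of_ne (fun hc => h (Sum.inl.inj hc)),
            Function.update_of_ne (by simp), Function.update_of_ne (by simp)]
      · simp only [phi0, phi1, Xv, Zv, map_add, map_mul, map_pow, aeval_X]
        by_cases h : l = i
        · subst h
          rw [Function.update_self, Function.update_self,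
            Function.update_of_ne (by simp), Function.update_of_ne (by simp)]
          ring
        · rw [Function.update_of_ne (fun hc => h (Sum.inl.inj hc)), Function.update_of_ne (fun hc => h (Sum.inl.inj hc)),
            Function.update_of_ne (by simp), Function.update_of_ne (by simp)]
    have h2 : (psi k n m i).comp (phi1 k n m i) f = f := by
      have := eq_on_supported (s := Set.range (Sum.inl : Fin n → BonnetVars n m))
        (φ := (psi k n m i).comp (phi1 k n m i))
        (ψ := AlgHom.id k (MvPolynomial (BonnetVars n m) k)) ?_ hs
      · simpa using this
      rintro w ⟨l, rfl⟩
      simp only [AlgHom.coe_comp, Function.comp_apply, phi1, psi, aeval_X, AlgHom.coe_id, id_eq]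
      by_cases h : l = i
      · subst h
        rw [Function.update_self, map_neg, aeval_X, Function.update_self, neg_neg]
      · rw [Function.update_of_ne (fun hc => h (Sum.inl.inj hc)), aeval_X, Function.update_of_ne (by simp)]
    have h3 : f = (psi k n m i).comp (phi0 k n m i) f := by
      simp only [AlgHom.coe_comp, Function.comp_apply] at h2 ⊢
      rw [h01, h2]
    have h4 : (psi k n m i).comp (phi0 k n m i) f ∈
        supported k {w : BonnetVars n m | w ≠ Sum.inl i} := by
      rw [supported_eq_adjoin_X] at hs
      refine adjoin_image_le _ ?_ hs
      rintro _ ⟨w, ⟨l, rfl⟩, rfl⟩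
      simp only [AlgHom.coe_comp, Function.comp_apply, phi0, psi, aeval_X]
      by_cases h : l = i
      · subst h
        rw [Function.update_self, map_zero]
        exact zero_mem _
      · rw [Function.update_of_ne (fun hc => h (Sum.inl.inj hc)), aeval_X, Function.update_of_ne (by simp)]
        exact X_mem_supported.2 (by simp [h])
    rw [h3] at hs ⊢
    exact mem_supported.1 h4
  have hempty : (f.vars : Set (BonnetVars n m)) ⊆ (∅ : Set (BonnetVars n m)) := by
    intro w hw
    obtain ⟨i, rfl⟩ := mem_supported.1 hs hw
    exact absurd rfl (key i hw)
  have : f ∈ supported k (∅ : Set (BonnetVars n m)) := mem_supported.2 hempty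
  rw [supported_empty, Algebra.mem_bot] at this
  obtain ⟨c, hc⟩ := this
  exact ⟨c, hc.symm⟩

lemma const_of_mem_Anm {f : MvPolynomial (BonnetVars n m) k}
    (hA : f ∈ Anm k n m)
    (hs : f ∈ supported k (Set.range (Sum.inl : Fin n → BonnetVars n m))) :
    ∃ c : k, f = C c := by
  have hrho : rho k n m f = f := by
    have := eq_on_supported (φ := rho k n m)
      (ψ := AlgHom.id k (MvPolynomial (BonnetVars n m) k)) ?_ hs
    · simpa using this
    rintro w ⟨l, rfl⟩
    simp [rho]
  have hA' : rho k n m f ∈ Aprime k n m := by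
    refine adjoin_image_le _ ?_ hA
    rintro x ((((⟨j, rfl⟩ | rfl) | ⟨i, rfl⟩) | ⟨i, rfl⟩) | ⟨s, j, rfl⟩)
    · have : rho k n m (Yv k n m j) = 0 := by simp [rho, Yv]
      rw [this]; exact zero_mem _
    · have : rho k n m (Zv k n m) = Zv k n m := by simp [rho, Zv]
      rw [this]
      exact Algebra.subset_adjoin (by left; left; rfl)
    · have : rho k n m (Xv k n m i ^ 2 + Xv k n m i * Zv k n m)
          = Xv k n m i ^ 2 + Xv k n m i * Zv k n m := by
        simp [rho, Xv, Zv]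
      rw [this]
      exact Algebra.subset_adjoin (by left; right; exact ⟨i, rfl⟩)
    · have : rho k n m (Xv k n m i ^ 3 + Xv k n m i ^ 2 * Zv k n m)
          = Xv k n m i ^ 3 + Xv k n m i ^ 2 * Zv k n m := by
        simp [rho, Xv, Zv]
      rw [this]
      exact Algebra.subset_adjoin (by right; exact ⟨i, rfl⟩)
    · have : rho k n m ((∏ i ∈ s, Xv k n m i) * Yv k n m j) = 0 := by
        have hy : rho k n m (Yv k n m j) = 0 := by simp [rho, Yv]
        rw [map_mul, hy, mul_zero]
      rw [this]; exact zero_mem _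
  rw [hrho] at hA'
  exact const_of_mem_Aprime hA' hs


lemma mono_eq {d : BonnetVars n m →₀ ℕ} (hd : d (Sum.inr (Sum.inr ())) = 0) :
    (monomial d (1:k)) = (∏ i, Xv k n m i ^ d (Sum.inl i)) *
      ∏ j, Yv k n m j ^ d (Sum.inr (Sum.inl j)) := by
  rw [monomial_eq, C_1, one_mul, Finsupp.prod_fintype _ _ (fun w => pow_zero _),
    Fintype.prod_sum_type, Fintype.prod_sum_type]
  simp [Xv, Yv, hd]

end BonnetAux

/-- `k[x_1,…,x_n,y_1,…,y_m] ∩ A_{n,m}` is the `k`-subalgebra generated by the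
monomials `x_1^{i_1}⋯x_n^{i_n} y_1^{j_1}⋯y_m^{j_m}` with `j_1 + ⋯ + j_m > 0`;
in particular every element of `A_{n,m}` depending only on `x_1,…,x_n` is
constant. -/
theorem Anm_inter_xy_eq_monomial_algebra :
    (MvPolynomial.supported k {w : BonnetVars n m | w ≠ Sum.inr (Sum.inr ())}
        ⊓ Anm k n m = Algebra.adjoin k (MonoSet k n m)) ∧
      ∀ f ∈ Anm k n m,
        f ∈ MvPolynomial.supported k (Set.range (Sum.inl : Fin n → BonnetVars n m)) →
          ∃ c : k, f = MvPolynomial.C c := by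
  classical
  have hMle : Algebra.adjoin k (MonoSet k n m) ≤ Anm k n m := by
    apply Algebra.adjoin_le
    rintro p ⟨iv, jv, hj, rfl⟩
    exact BonnetAux.mono_mem iv jv hj
  constructor
  · apply le_antisymm
    · intro f hf
      rw [Algebra.mem_inf] at hf
      obtain ⟨hfs, hfA⟩ := hf
      have hz0 : ∀ d ∈ f.support, d (Sum.inr (Sum.inr ())) = 0 := by
        intro d hd
        by_contra hzc
        exact (mem_supported.1 hfs ((mem_vars _).2 ⟨d, hd, Finsupp.mem_support_iff.2 hzc⟩)) rfl
      set P : (BonnetVars n m →₀ ℕ) → Prop := fun d => 0 < ∑ j, d (Sum.inr (Sum.inl j)) with hP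
      have hsplit : (∑ d ∈ f.support.filter P, monomial d (coeff d f)) +
          (∑ d ∈ f.support.filter (fun d => ¬ P d), monomial d (coeff d f)) = f := by
        rw [Finset.sum_filter_add_sum_filter_not]
        exact support_sum_monomial_coeff f
      set h := ∑ d ∈ f.support.filter P, monomial d (coeff d f) with hh
      set g := ∑ d ∈ f.support.filter (fun d => ¬ P d), monomial d (coeff d f) with hg
      have hmem : h ∈ Algebra.adjoin k (MonoSet k n m) := by
        refine sum_mem fun d hd => ?_
        rw [Finset.mem_filter] at hd
        have e : (monomial d (coeff d f)) = C (coeff d f) * monomial d 1 := by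
          rw [C_mul_monomial, mul_one]
        rw [e]
        refine mul_mem ?_ (Algebra.subset_adjoin ?_)
        · rw [← algebraMap_eq]; exact Subalgebra.algebraMap_mem _ _
        · exact ⟨fun i => d (Sum.inl i), fun j => d (Sum.inr (Sum.inl j)), hd.2,
            BonnetAux.mono_eq (hz0 d hd.1)⟩
      have hgs : g ∈ supported k (Set.range (Sum.inl : Fin n → BonnetVars n m)) := by
        refine sum_mem fun d hd => ?_
        rw [Finset.mem_filter] at hd
        have hy0 : ∀ j, d (Sum.inr (Sum.inl j)) = 0 := by
          have hsum : ∑ j, d (Sum.inr (Sum.inl j)) = 0 := by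
            have := hd.2
            rw [hP] at this
            omega
          intro j
          exact Finset.sum_eq_zero_iff.1 hsum j (Finset.mem_univ j)
        have e : (monomial d (coeff d f)) = C (coeff d f) *
            ((∏ i, Xv k n m i ^ d (Sum.inl i)) *
              ∏ j, Yv k n m j ^ d (Sum.inr (Sum.inl j))) := by
          rw [← BonnetAux.mono_eq (hz0 d hd.1), C_mul_monomial, mul_one]
        rw [e]
        refine mul_mem ?_ (mul_mem
          (prod_mem fun i _ => pow_mem (X_mem_supported.2 (Set.mem_range_self i)) _)
          (prod_mem fun j _ => by rw [hy0 j, pow_zero]; exact one_mem _))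
        rw [← algebraMap_eq]; exact Subalgebra.algebraMap_mem _ _
      have hgA : g ∈ Anm k n m := by
        have e : g = f - h := by rw [← hsplit]; ring
        rw [e]
        exact sub_mem hfA (hMle hmem)
      obtain ⟨c, hc⟩ := BonnetAux.const_of_mem_Anm hgA hgs
      have e : f = C c + h := by rw [← hsplit, ← hc]; ring
      rw [e]
      exact add_mem (by rw [← algebraMap_eq]; exact Subalgebra.algebraMap_mem _ _) hmem
    · apply Algebra.adjoin_le
      rintro p ⟨iv, jv, hj, rfl⟩
      rw [SetLike.mem_coe, Algebra.mem_inf]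
      refine ⟨mul_mem (prod_mem fun i _ => pow_mem (X_mem_supported.2 (by simp)) _)
        (prod_mem fun j _ => pow_mem (X_mem_supported.2 (by simp)) _),
        BonnetAux.mono_mem iv jv hj⟩
  · intro f hfA hfs
    exact BonnetAux.const_of_mem_Anm hfA hfs
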